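/- arXiv:1204.4227 — 5 statements merged into one kernel-verified Lean document; each statement's English description precedes it below -/
import Mathlib

section
/- Let x ∈ R^p be nonzero, T ∈ {1,...,p}, and let x_T denote the best T-term approximation of x (keeping the T largest-magnitude coordinates and zeroing the rest). If (1/√T)·‖x − x_T‖₁/‖x‖₂ ≤ ε for some ε > 0, then T ≥ s(x)/(1+ε)². -/
/-- If the `T`-term approximation error satisfies
`(1/√T)·‖x − x_T‖₁/‖x‖₂ ≤ ε`, then `T ≥ s(x)/(1+ε)²`.
Here `x_T` keeps the coordinates in a set `S` of the `T` largest-magnitude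
coordinates of `x` and zeros the rest. -/
theorem T_lower_bound_of_small_approx_error (p T : ℕ) (hT1 : 1 ≤ T) (hTp : T ≤ p)
    (x : Fin p → ℝ) (hx : x ≠ 0) (S : Finset (Fin p)) (hS : S.card = T)
    (hbig : ∀ i ∈ S, ∀ j ∉ S, |x j| ≤ |x i|) (ε : ℝ) (hε : 0 < ε)
    (herr : (1 / Real.sqrt T) *
        ((∑ i, |x i - (if i ∈ S then x i else 0)|) / Real.sqrt (∑ i, (x i) ^ 2)) ≤ ε) :
    (∑ i, |x i|) ^ 2 / (∑ i, (x i) ^ 2) / (1 + ε) ^ 2 ≤ (T : ℝ) := by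
  have hB2 : 0 < ∑ i, (x i) ^ 2 := by
    have : ∃ i, x i ≠ 0 := by
      by_contra h; push_neg at h; exact hx (funext h)
    obtain ⟨i, hi⟩ := this
    exact Finset.sum_pos' (fun j _ => sq_nonneg _)
      ⟨i, Finset.mem_univ i, by positivity⟩
  set B := Real.sqrt (∑ i, (x i) ^ 2) with hBdef
  have hB : 0 < B := Real.sqrt_pos.2 hB2
  have hTpos : (0:ℝ) < T := by exact_mod_cast hT1
  have hsT : 0 < Real.sqrt T := Real.sqrt_pos.2 hTpos
  have hsplit : (∑ i, |x i - (if i ∈ S then x i else 0)|) = ∑ i ∈ Sᶜ, |x i| := by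
    rw [← Finset.sum_add_sum_compl S (fun i => |x i - (if i ∈ S then x i else 0)|)]
    have h1 : ∑ i ∈ S, |x i - (if i ∈ S then x i else 0)| = 0 := by
      apply Finset.sum_eq_zero; intro i hi; simp [hi]
    have h2 : ∑ i ∈ Sᶜ, |x i - (if i ∈ S then x i else 0)| = ∑ i ∈ Sᶜ, |x i| := by
      apply Finset.sum_congr rfl; intro i hi
      simp [Finset.mem_compl.mp hi]
    rw [h1, h2, zero_add]
  have herr' : (∑ i ∈ Sᶜ, |x i|) ≤ ε * (Real.sqrt T * B) := by
    rw [← div_le_iff₀ (by positivity)]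
    calc (∑ i ∈ Sᶜ, |x i|) / (Real.sqrt T * B)
        = (1 / Real.sqrt T) * ((∑ i ∈ Sᶜ, |x i|) / B) := by ring
      _ ≤ ε := by rw [← hsplit]; exact herr
  have hCS : (∑ i ∈ S, |x i|) ^ 2 ≤ T * ∑ i, (x i) ^ 2 := by
    have h1 : (∑ i ∈ S, 1 * |x i|) ^ 2 ≤ (∑ i ∈ S, 1 ^ 2) * ∑ i ∈ S, |x i| ^ 2 :=
      Finset.sum_mul_sq_le_sq_mul_sq S 1 (fun i => |x i|)
    simp only [one_mul, one_pow, Finset.sum_const, nsmul_eq_mul, mul_one, sq_abs, hS] at h1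
    calc (∑ i ∈ S, |x i|) ^ 2 ≤ (T:ℝ) * ∑ i ∈ S, (x i) ^ 2 := h1
      _ ≤ (T:ℝ) * ∑ i, (x i) ^ 2 := by
          apply mul_le_mul_of_nonneg_left _ (le_of_lt hTpos)
          exact Finset.sum_le_sum_of_subset_of_nonneg (Finset.subset_univ S)
            (fun i _ _ => sq_nonneg _)
  have hCS' : (∑ i ∈ S, |x i|) ≤ Real.sqrt T * B := by
    have h0 : 0 ≤ ∑ i ∈ S, |x i| := Finset.sum_nonneg fun i _ => abs_nonneg _
    have := Real.sqrt_le_sqrt hCS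
    rwa [Real.sqrt_sq h0, Real.sqrt_mul (le_of_lt hTpos), ← hBdef] at this
  have hA : (∑ i, |x i|) ≤ (1 + ε) * (Real.sqrt T * B) := by
    rw [← Finset.sum_add_sum_compl S (fun i => |x i|)]
    nlinarith [mul_pos hsT hB]
  have hAnn : 0 ≤ ∑ i, |x i| := Finset.sum_nonneg fun i _ => abs_nonneg _
  have hBsq : B ^ 2 = ∑ i, (x i) ^ 2 := Real.sq_sqrt (le_of_lt hB2)
  have hTsq : (Real.sqrt T) ^ 2 = (T:ℝ) := Real.sq_sqrt (le_of_lt hTpos)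
  rw [div_div, div_le_iff₀ (by positivity)]
  calc (∑ i, |x i|) ^ 2 ≤ ((1 + ε) * (Real.sqrt T * B)) ^ 2 := by
        exact pow_le_pow_left₀ hAnn hA 2
    _ = (T:ℝ) * ((∑ i, (x i) ^ 2) * (1 + ε) ^ 2) := by
        rw [mul_pow, mul_pow, hBsq, hTsq]; ring
end

section
/- Let x ∈ R^p be nonzero, T ∈ {1,...,p}, and c > 0. If T ≥ c·s(x)·log(p), then the T-term approximation error satisfies (1/√T)·‖x − x_T‖₁/‖x‖₂ ≤ (1/√(c·log p))·(1 − T/p). -/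
/-!
Since `S` carries the `T` largest entries, averaging each of the `p - T` discarded entries against
the `T` kept ones gives `T‖x - x_T‖₁ ≤ (p - T)‖x_T‖₁`, i.e. `‖x - x_T‖₁ ≤ (1 - T/p)‖x‖₁`.
Dividing by `√T‖x‖₂` leaves `(1 - T/p)√(s(x)/T)`, and the hypothesis says exactly that
`s(x)/T ≤ 1/(c log p)`. For `T = p` both sides vanish; otherwise `p ≥ 2`, so `c log p > 0`.
-/

open Finset Real

variable {ι : Type*} [Fintype ι]

section
variable [DecidableEq ι]

theorem Finset.card_nsmul_sum_compl_le_card_compl_nsmul_sum {M : Type*} [AddCommMonoid M]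
    [PartialOrder M] [IsOrderedAddMonoid M] {f : ι → M} {S : Finset ι}
    (hS : ∀ i ∈ S, ∀ j ∉ S, f j ≤ f i) :
    #S • ∑ j ∈ Sᶜ, f j ≤ #Sᶜ • ∑ i ∈ S, f i := by
  calc #S • ∑ j ∈ Sᶜ, f j = ∑ i ∈ S, ∑ j ∈ Sᶜ, f j := by rw [sum_const]
    _ ≤ ∑ i ∈ S, ∑ _j ∈ Sᶜ, f i :=
        sum_le_sum fun i hi => sum_le_sum fun j hj => hS i hi j (mem_compl.mp hj)
    _ = #Sᶜ • ∑ i ∈ S, f i := by rw [sum_comm, sum_const]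

theorem Finset.sum_compl_le_one_sub_card_div_mul_sum {f : ι → ℝ} {S : Finset ι}
    (hS : ∀ i ∈ S, ∀ j ∉ S, f j ≤ f i) :
    ∑ j ∈ Sᶜ, f j ≤ (1 - #S / Fintype.card ι) * ∑ i, f i := by
  rcases isEmpty_or_nonempty ι with hι | hι
  · simp [eq_empty_of_isEmpty Sᶜ]
  have hcard : (0 : ℝ) < Fintype.card ι := by exact_mod_cast Fintype.card_pos
  have hS' := card_nsmul_sum_compl_le_card_compl_nsmul_sum hS
  rw [nsmul_eq_mul, nsmul_eq_mul, card_compl, Nat.cast_sub (card_le_univ S)] at hS'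
  rw [← sum_compl_add_sum S, one_sub_div hcard.ne', div_mul_eq_mul_div, le_div_iff₀ hcard]
  nlinarith

theorem sum_abs_sub_ite_mem_eq_sum_compl (x : ι → ℝ) (S : Finset ι) :
    ∑ i, |x i - (if i ∈ S then x i else 0)| = ∑ i ∈ Sᶜ, |x i| := by
  rw [← sum_compl_add_sum S,
    sum_eq_zero (s := S) fun i hi => by rw [if_pos hi, sub_self, abs_zero], add_zero]
  exact sum_congr rfl fun i hi => by rw [if_neg (mem_compl.mp hi), sub_zero]

end

/-- The `s(x)` of the statement (with `sparsity 0 = 0`). -/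
noncomputable def sparsity (x : ι → ℝ) : ℝ :=
  (∑ i, |x i|) ^ 2 / ∑ i, x i ^ 2

theorem sqrt_sparsity (x : ι → ℝ) :
    √(sparsity x) = (∑ i, |x i|) / √(∑ i, x i ^ 2) := by
  rw [sparsity, sqrt_div' _ (sum_nonneg fun i _ => sq_nonneg (x i)),
    sqrt_sq (sum_nonneg fun i _ => abs_nonneg (x i))]

theorem sqrt_div_sqrt_le_one_div_sqrt {s t a : ℝ} (ht : 0 < t) (ha : 0 < a) (h : a * s ≤ t) :
    √s / √t ≤ 1 / √a := by
  rw [← sqrt_div' s ht.le, one_div, ← sqrt_inv, ← one_div]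
  exact sqrt_le_sqrt ((div_le_div_iff₀ ht ha).mpr (by linarith))

theorem approx_error_upper_bound_general (p T : ℕ) (hT1 : 1 ≤ T) (hTp : T ≤ p)
    (x : Fin p → ℝ) (S : Finset (Fin p)) (hS : S.card = T)
    (hbig : ∀ i ∈ S, ∀ j ∉ S, |x j| ≤ |x i|) (c : ℝ) (hc : 0 < c)
    (hT : c * ((∑ i, |x i|) ^ 2 / (∑ i, (x i) ^ 2)) * Real.log p ≤ (T : ℝ)) :
    (1 / Real.sqrt T) *
        ((∑ i, |x i - (if i ∈ S then x i else 0)|) / Real.sqrt (∑ i, (x i) ^ 2)) ≤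
      (1 / Real.sqrt (c * Real.log p)) * (1 - (T : ℝ) / p) := by
  have hTpos : (0 : ℝ) < T := by exact_mod_cast hT1
  have htail := sum_compl_le_one_sub_card_div_mul_sum (f := fun i => |x i|) hbig
  rw [hS, Fintype.card_fin] at htail
  have hratio : √(sparsity x) / √T * (1 - (T : ℝ) / p) ≤
      1 / √(c * log p) * (1 - (T : ℝ) / p) := by
    rcases hTp.eq_or_lt with rfl | hTp
    · simp [div_self hTpos.ne']
    have hp : (1 : ℝ) < p := by exact_mod_cast hT1.trans_lt hTp
    have hr : 0 ≤ 1 - (T : ℝ) / p := by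
      rw [sub_nonneg, div_le_one (by linarith)]; exact_mod_cast hTp.le
    refine mul_le_mul_of_nonneg_right (sqrt_div_sqrt_le_one_div_sqrt hTpos
      (mul_pos hc (log_pos hp)) ?_) hr
    change c * sparsity x * log p ≤ T at hT
    linarith
  calc (1 / √T) * ((∑ i, |x i - (if i ∈ S then x i else 0)|) / √(∑ i, x i ^ 2))
      = (1 / √T) * ((∑ i ∈ Sᶜ, |x i|) / √(∑ i, x i ^ 2)) := by
        rw [sum_abs_sub_ite_mem_eq_sum_compl]
    _ ≤ (1 / √T) * ((1 - (T : ℝ) / p) * (∑ i, |x i|) / √(∑ i, x i ^ 2)) := by gcongr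
    _ = √(sparsity x) / √T * (1 - (T : ℝ) / p) := by rw [sqrt_sparsity]; ring
    _ ≤ _ := hratio

/-- If `T ≥ c·s(x)·log p`, then the `T`-term approximation error satisfies
`(1/√T)·‖x − x_T‖₁/‖x‖₂ ≤ (1/√(c·log p))·(1 − T/p)`. -/
theorem approx_error_upper_bound (p T : ℕ) (hT1 : 1 ≤ T) (hTp : T ≤ p)
    (x : Fin p → ℝ) (hx : x ≠ 0) (S : Finset (Fin p)) (hS : S.card = T)
    (hbig : ∀ i ∈ S, ∀ j ∉ S, |x j| ≤ |x i|) (c : ℝ) (hc : 0 < c)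
    (hT : c * ((∑ i, |x i|) ^ 2 / (∑ i, (x i) ^ 2)) * Real.log p ≤ (T : ℝ)) :
    (1 / Real.sqrt T) *
        ((∑ i, |x i - (if i ∈ S then x i else 0)|) / Real.sqrt (∑ i, (x i) ^ 2)) ≤
      (1 / Real.sqrt (c * Real.log p)) * (1 - (T : ℝ) / p) :=
  approx_error_upper_bound_general p T hT1 hTp x S hS hbig c hc hT
end

section
/- For any nonzero x ∈ R^p and T ∈ {1,...,p} with x_T ≠ 0, the T-term approximation error satisfies (1/√T)·‖x − x_T‖₁/‖x‖₂ ≥ √(s(x)/T) − 1. -/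
/-- For nonzero `x` and `T ∈ {1,…,p}` with `x_T ≠ 0`, the `T`-term
approximation error satisfies `(1/√T)·‖x − x_T‖₁/‖x‖₂ ≥ √(s(x)/T) − 1`. -/
theorem approx_error_lower_bound (p T : ℕ) (hT1 : 1 ≤ T) (hTp : T ≤ p)
    (x : Fin p → ℝ) (hx : x ≠ 0) (S : Finset (Fin p)) (hS : S.card = T)
    (hbig : ∀ i ∈ S, ∀ j ∉ S, |x j| ≤ |x i|)
    (hxT : (fun i => if i ∈ S then x i else 0) ≠ (0 : Fin p → ℝ)) :
    Real.sqrt ((∑ i, |x i|) ^ 2 / (∑ i, (x i) ^ 2) / T) - 1 ≤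
      (1 / Real.sqrt T) *
        ((∑ i, |x i - (if i ∈ S then x i else 0)|) / Real.sqrt (∑ i, (x i) ^ 2)) := by
  have hN2pos : 0 < ∑ i, (x i) ^ 2 := by
    obtain ⟨i, hi⟩ : ∃ i, x i ≠ 0 := by
      by_contra h; push_neg at h; exact hx (funext h)
    exact Finset.sum_pos' (fun j _ => sq_nonneg _)
      ⟨i, Finset.mem_univ i, by positivity⟩
  have hTpos : (0:ℝ) < T := by exact_mod_cast hT1
  have hsT : 0 < Real.sqrt T := Real.sqrt_pos.mpr hTpos
  have hsN : 0 < Real.sqrt (∑ i, (x i) ^ 2) := Real.sqrt_pos.mpr hN2pos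
  set A : ℝ := ∑ i ∈ S, |x i| with hA
  -- rewrite the error sum
  have hB : (∑ i, |x i - (if i ∈ S then x i else 0)|) = (∑ i, |x i|) - A := by
    have h1 : (∑ i, |x i - (if i ∈ S then x i else 0)|)
        = ∑ i, ((if i ∈ S then 0 else |x i|) : ℝ) := by
      apply Finset.sum_congr rfl
      intro i _
      by_cases h : i ∈ S <;> simp [h]
    have h2 : (∑ i, |x i|) = ∑ i, ((if i ∈ S then |x i| else 0) : ℝ) + ∑ i, ((if i ∈ S then 0 else |x i|) : ℝ) := by
      rw [← Finset.sum_add_distrib]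
      apply Finset.sum_congr rfl
      intro i _
      by_cases h : i ∈ S <;> simp [h]
    have h3 : A = ∑ i, ((if i ∈ S then |x i| else 0) : ℝ) := by
      rw [hA, Finset.sum_ite_mem, Finset.univ_inter]
    rw [h1, h2, ← h3]; ring
  -- Cauchy-Schwarz bound: A ≤ √T * √(∑ x²)
  have hCS : A ≤ Real.sqrt T * Real.sqrt (∑ i, (x i) ^ 2) := by
    have h2 := Finset.sum_mul_sq_le_sq_mul_sq S (fun _ => (1:ℝ)) (fun i => |x i|)
    simp only [one_pow, one_mul, sq_abs, Finset.sum_const, nsmul_eq_mul, mul_one, hS] at h2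
    have hAnn : 0 ≤ A := Finset.sum_nonneg fun i _ => abs_nonneg _
    calc A = Real.sqrt (A ^ 2) := (Real.sqrt_sq hAnn).symm
      _ ≤ Real.sqrt ((T:ℝ) * ∑ i ∈ S, (x i) ^ 2) := Real.sqrt_le_sqrt h2
      _ = Real.sqrt T * Real.sqrt (∑ i ∈ S, (x i) ^ 2) := Real.sqrt_mul (by positivity) _
      _ ≤ Real.sqrt T * Real.sqrt (∑ i, (x i) ^ 2) := by
          apply mul_le_mul_of_nonneg_left _ (Real.sqrt_nonneg _)
          apply Real.sqrt_le_sqrt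
          exact Finset.sum_le_sum_of_subset_of_nonneg (Finset.subset_univ S)
            (fun i _ _ => sq_nonneg _)
  -- rewrite the LHS sqrt
  have hL : Real.sqrt ((∑ i, |x i|) ^ 2 / (∑ i, (x i) ^ 2) / T)
      = (∑ i, |x i|) / (Real.sqrt (∑ i, (x i) ^ 2) * Real.sqrt T) := by
    rw [Real.sqrt_div' _ (by positivity), Real.sqrt_div' _ (by positivity),
      Real.sqrt_sq (by positivity), div_div]
  rw [hL, hB]
  have hD : 0 < Real.sqrt (∑ i, (x i) ^ 2) * Real.sqrt T := by positivity
  have hRHS : (1 / Real.sqrt T) * (((∑ i, |x i|) - A) / Real.sqrt (∑ i, (x i) ^ 2))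
      = ((∑ i, |x i|) - A) / (Real.sqrt (∑ i, (x i) ^ 2) * Real.sqrt T) := by
    rw [div_mul_div_comm, one_mul, mul_comm]
  rw [hRHS, div_sub_one hD.ne', div_le_div_iff_of_pos_right hD]
  linarith [hCS]
end

section
/- If p ≥ 100 and T ≥ 2·s(x)·log(p) with T ≤ p and x ∈ R^p nonzero, then (1/√T)·‖x − x_T‖₁/‖x‖₂ ≤ 1/3. -/
/-!
The approximation error is at most `‖x‖₁`, so the left-hand side is at most
`‖x‖₁ / (√T ‖x‖₂) = √(s(x) / T)`. Since `log p ≥ log 100 > 9/2`, the hypothesis gives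
`T ≥ 9 s(x)`, whence the bound `1/3`.
-/

open Real

/-- `exp (9/2) ^ 2 = exp 1 ^ 9 < 2.7182818286 ^ 9 < 100 ^ 2`. -/
lemma Real.nine_div_two_le_log_hundred : (9 / 2 : ℝ) ≤ log 100 := by
  rw [le_log_iff_exp_le (by norm_num)]
  have hsq : exp (9 / 2) ^ 2 = exp 1 ^ 9 := by
    rw [← exp_nat_mul, ← exp_nat_mul]; norm_num
  have hexp : exp 1 ^ 9 < 2.7182818286 ^ 9 :=
    pow_lt_pow_left₀ exp_one_lt_d9 (exp_pos 1).le (by norm_num)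
  nlinarith [exp_pos (9 / 2)]

lemma Finset.sum_abs_sub_ite_le_sum_abs {ι : Type*} [Fintype ι] [DecidableEq ι]
    (x : ι → ℝ) (S : Finset ι) :
    ∑ i, |x i - (if i ∈ S then x i else 0)| ≤ ∑ i, |x i| :=
  Finset.sum_le_sum fun i _ => by by_cases h : i ∈ S <;> simp [h]

lemma div_sqrt_mul_sqrt_le_inv {a b t c : ℝ} (hc : 0 < c)
    (h : c ^ 2 * (a ^ 2 / b) ≤ t) : a / (√t * √b) ≤ c⁻¹ := by
  rcases le_or_gt b 0 with hb | hb
  · simp [sqrt_eq_zero'.mpr hb, hc.le]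
  have hsq : (c * a) ^ 2 ≤ t * b := by
    have := mul_le_mul_of_nonneg_right h hb.le
    rwa [mul_assoc, div_mul_cancel₀ _ hb.ne', ← mul_pow] at this
  have hca : c * a ≤ √t * √b := by
    rw [← sqrt_mul' t hb.le]
    exact le_sqrt_of_sq_le hsq
  refine div_le_of_le_mul₀ (by positivity) (inv_nonneg.mpr hc.le) ?_
  rw [inv_mul_eq_div, le_div_iff₀' hc]
  exact hca

theorem approx_error_le_third_general (p T : ℕ) (hp : 100 ≤ p)
    (x : Fin p → ℝ) (S : Finset (Fin p))
    (hT : 2 * ((∑ i, |x i|) ^ 2 / (∑ i, (x i) ^ 2)) * Real.log p ≤ (T : ℝ)) :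
    (1 / Real.sqrt T) *
        ((∑ i, |x i - (if i ∈ S then x i else 0)|) / Real.sqrt (∑ i, (x i) ^ 2)) ≤
      1 / 3 := by
  set s := (∑ i, |x i|) ^ 2 / (∑ i, (x i) ^ 2)
  have hlog : (9 / 2 : ℝ) ≤ log p :=
    nine_div_two_le_log_hundred.trans (log_le_log (by norm_num) (by exact_mod_cast hp))
  have hs : (3 : ℝ) ^ 2 * s ≤ T := by
    have : 0 ≤ s := by positivity
    nlinarith
  calc (1 / √T) * ((∑ i, |x i - (if i ∈ S then x i else 0)|) / √(∑ i, (x i) ^ 2))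
      = (∑ i, |x i - (if i ∈ S then x i else 0)|) / (√T * √(∑ i, (x i) ^ 2)) := by ring
    _ ≤ (∑ i, |x i|) / (√T * √(∑ i, (x i) ^ 2)) :=
        div_le_div_of_nonneg_right (Finset.sum_abs_sub_ite_le_sum_abs x S) (by positivity)
    _ ≤ 3⁻¹ := div_sqrt_mul_sqrt_le_inv (by norm_num) hs
    _ = 1 / 3 := by norm_num

/-- If `p ≥ 100` and `T ≥ 2·s(x)·log p` with `T ≤ p`, then the `T`-term
approximation error is at most `1/3`. -/
theorem approx_error_le_third (p T : ℕ) (hp : 100 ≤ p) (hT1 : 1 ≤ T) (hTp : T ≤ p)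
    (x : Fin p → ℝ) (hx : x ≠ 0) (S : Finset (Fin p)) (hS : S.card = T)
    (hbig : ∀ i ∈ S, ∀ j ∉ S, |x j| ≤ |x i|)
    (hT : 2 * ((∑ i, |x i|) ^ 2 / (∑ i, (x i) ^ 2)) * Real.log p ≤ (T : ℝ)) :
    (1 / Real.sqrt T) *
        ((∑ i, |x i - (if i ∈ S then x i else 0)|) / Real.sqrt (∑ i, (x i) ^ 2)) ≤
      1 / 3 :=
  approx_error_le_third_general p T hp x S hT
end

section
/- Let A ∈ R^{n×p} be an arbitrary matrix with n < p, and let x ∈ R^p be arbitrary. Then there exists a nonzero vector x̃ ∈ R^p with A x̃ = A x and s(x̃) ≥ (p − n)/(1 + 2√(2 log(2p)))². -/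
/-!
The kernel `K` of `A` has dimension at least `p - n`. For the orthogonal projection `P` onto `K`
and a sign vector `σ ∈ {±1}^p`, `‖Pσ‖₂² = ⟪Pσ, σ⟫ ≤ ‖Pσ‖₁`, while the average of `‖Pσ‖₂²` over all
sign vectors is `tr P = dim K`. Hence some `u = Pσ ∈ K` has `s(u) ≥ ‖u‖₂² ≥ p - n`. As `s` is
scale invariant and continuous away from `0`, `s(x + t u) → s(u)` when `t → ∞`, and `s(u)` exceeds
the required bound, whose denominator is larger than `1`.
-/

open Matrix Filter Topology Module

open scoped RealInnerProductSpace

section Sparsity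

variable {ι : Type*} [Fintype ι]

noncomputable def numericalSparsity (v : ι → ℝ) : ℝ := (∑ i, |v i|) ^ 2 / ∑ i, v i ^ 2

theorem numericalSparsity_smul {c : ℝ} (hc : c ≠ 0) (v : ι → ℝ) :
    numericalSparsity (c • v) = numericalSparsity v := by
  simp only [numericalSparsity, Pi.smul_apply, smul_eq_mul, abs_mul, mul_pow, ← Finset.mul_sum]
  rw [sq_abs, mul_div_mul_left _ _ (pow_ne_zero 2 hc)]

theorem sum_sq_ne_zero {v : ι → ℝ} (hv : v ≠ 0) : ∑ i, v i ^ 2 ≠ 0 := by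
  rw [Ne, Fintype.sum_eq_zero_iff_of_nonneg fun i => sq_nonneg (v i)]
  contrapose! hv
  ext i
  simpa using congrFun hv i

theorem continuousAt_numericalSparsity {v : ι → ℝ} (hv : v ≠ 0) :
    ContinuousAt numericalSparsity v :=
  ContinuousAt.div ((continuous_finsetSum _ fun i _ => by fun_prop).pow 2).continuousAt
    (continuous_finsetSum _ fun i _ => by fun_prop).continuousAt (sum_sq_ne_zero hv)

theorem sum_sq_le_numericalSparsity {v : ι → ℝ} (hv : ∑ i, v i ^ 2 ≤ ∑ i, |v i|) :
    ∑ i, v i ^ 2 ≤ numericalSparsity v := by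
  rcases (Finset.sum_nonneg fun i _ => sq_nonneg (v i)).eq_or_lt with h | h
  · rw [← h, numericalSparsity]
    positivity
  · rw [numericalSparsity, le_div_iff₀ h, ← sq]
    exact pow_le_pow_left₀ h.le hv 2

theorem exists_add_smul_ne_zero_lt_numericalSparsity (x : ι → ℝ) {u : ι → ℝ} (hu : u ≠ 0)
    {c : ℝ} (hc : c < numericalSparsity u) :
    ∃ t : ℝ, x + t • u ≠ 0 ∧ c < numericalSparsity (x + t • u) := by
  have hlim : Tendsto (fun t : ℝ => t⁻¹ • x + u) atTop (𝓝 u) := by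
    simpa using ((tendsto_inv_atTop_zero (𝕜 := ℝ)).smul_const x).add_const u
  obtain ⟨t, ht, hne, hlt⟩ := ((eventually_gt_atTop 0).and ((hlim.eventually_ne hu).and
    (hlim.eventually ((continuousAt_numericalSparsity hu).eventually (lt_mem_nhds hc))))).exists
  have hscale : x + t • u = t • (t⁻¹ • x + u) := by rw [smul_add, smul_inv_smul₀ ht.ne']
  refine ⟨t, ?_, ?_⟩
  · rw [hscale]
    exact smul_ne_zero ht.ne' hne
  · rwa [hscale, numericalSparsity_smul ht.ne']

end Sparsity

section SignVectors

variable {ι : Type*}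

def signVector (b : ι → Bool) : EuclideanSpace ℝ ι := WithLp.toLp 2 fun i => if b i then 1 else -1

theorem abs_signVector_apply (b : ι → Bool) (i : ι) : |signVector b i| = 1 := by
  by_cases h : b i <;> simp [signVector, h]

variable [Fintype ι] [DecidableEq ι]

theorem sum_signVector_mul_signVector (i j : ι) :
    ∑ b : ι → Bool, signVector b i * signVector b j = if i = j then 2 ^ Fintype.card ι else 0 := by
  split_ifs with hij
  · subst hij
    simp [← sq, ← sq_abs, abs_signVector_apply]
  · let toggle : Equiv.Perm (ι → Bool) := Function.Involutive.toPerm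
      (fun b => Function.update b i (!b i)) fun b => by simp
    have hflip (b : ι → Bool) : -(signVector b i * signVector b j) =
        signVector (Function.update b i (!b i)) i * signVector (Function.update b i (!b i)) j := by
      by_cases hi : b i <;> by_cases hj : b j <;>
        simp [signVector, hi, hj, Function.update_of_ne (Ne.symm hij)]
    have hsum := Fintype.sum_equiv toggle (fun b => -(signVector b i * signVector b j))
      (fun b => signVector b i * signVector b j) hflip
    rw [Finset.sum_neg_distrib] at hsum
    linarith

theorem sum_inner_signVector_sq (w : EuclideanSpace ℝ ι) :
    ∑ b : ι → Bool, ⟪w, signVector b⟫ ^ 2 = 2 ^ Fintype.card ι * ‖w‖ ^ 2 := by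
  calc ∑ b : ι → Bool, ⟪w, signVector b⟫ ^ 2
      = ∑ i, ∑ j, w i * w j * ∑ b : ι → Bool, signVector b i * signVector b j := by
        simp_rw [PiLp.inner_apply, sq, Finset.sum_mul_sum, Finset.mul_sum]
        rw [Finset.sum_comm]
        refine Finset.sum_congr rfl fun i _ => ?_
        rw [Finset.sum_comm]
        simp only [RCLike.inner_apply, conj_trivial]
        refine Finset.sum_congr rfl fun j _ => Finset.sum_congr rfl fun b _ => by ring
    _ = 2 ^ Fintype.card ι * ‖w‖ ^ 2 := by
        rw [EuclideanSpace.real_norm_sq_eq, Finset.mul_sum]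
        simp [sum_signVector_mul_signVector, sq, mul_comm]

end SignVectors

section Subspace

variable {ι : Type*} [Fintype ι] [DecidableEq ι]

theorem Submodule.exists_mem_finrank_le_norm_sq_le_sum_abs
    (K : Submodule ℝ (EuclideanSpace ℝ ι)) :
    ∃ u ∈ K, (finrank ℝ K : ℝ) ≤ ‖u‖ ^ 2 ∧ ‖u‖ ^ 2 ≤ ∑ i, |u i| := by
  have hnorm (v : EuclideanSpace ℝ ι) : ‖K.starProjection v‖ ^ 2 = ⟪K.starProjection v, v⟫ := by
    rw [← real_inner_self_eq_norm_sq, K.inner_starProjection_left_eq_right,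
      K.starProjection_eq_self_iff.2 (K.starProjection_apply_mem v), real_inner_comm]
  have hl1 (b : ι → Bool) :
      ⟪K.starProjection (signVector b), signVector b⟫ ≤ ∑ i, |K.starProjection (signVector b) i| := by
    rw [PiLp.inner_apply]
    refine Finset.sum_le_sum fun i _ => ?_
    calc _ ≤ |⟪K.starProjection (signVector b) i, signVector b i⟫| := le_abs_self _
      _ = _ := by simp [abs_mul, abs_signVector_apply]
  have htotal : ∑ b : ι → Bool, ‖K.starProjection (signVector b)‖ ^ 2 =
      ∑ _b : ι → Bool, (finrank ℝ K : ℝ) := by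
    let B := stdOrthonormalBasis ℝ K
    calc ∑ b : ι → Bool, ‖K.starProjection (signVector b)‖ ^ 2
        = ∑ j, ∑ b : ι → Bool, ⟪(B j : EuclideanSpace ℝ ι), signVector b⟫ ^ 2 := by
          rw [Finset.sum_comm]
          refine Finset.sum_congr rfl fun b _ => ?_
          rw [K.starProjection_apply, Submodule.norm_coe, ← B.sum_sq_inner_right]
          simp_rw [K.inner_orthogonalProjectionOnto_eq_of_mem_left]
      _ = ∑ _b : ι → Bool, (finrank ℝ K : ℝ) := by
          simp [sum_inner_signVector_sq, Submodule.norm_coe, B.norm_eq_one, mul_comm]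
  obtain ⟨b, -, hb⟩ := Finset.exists_le_of_sum_le Finset.univ_nonempty htotal.ge
  exact ⟨_, K.starProjection_apply_mem _, hb, (hnorm _).trans_le (hl1 b)⟩

theorem Matrix.card_le_card_add_finrank_ker_toEuclideanLin {m : Type*} [Fintype m]
    (A : Matrix m ι ℝ) :
    Fintype.card ι ≤ Fintype.card m + finrank ℝ (LinearMap.ker (toEuclideanLin A)) := by
  have hrange := Submodule.finrank_le (LinearMap.range (toEuclideanLin A))
  have := LinearMap.finrank_range_add_finrank_ker (toEuclideanLin A)
  simp only [finrank_euclideanSpace] at hrange this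
  omega

end Subspace

/-- For any matrix `A ∈ ℝ^{n×p}` with `n < p` and any `x ∈ ℝ^p`, there is a
nonzero `x̃` with `A x̃ = A x` and `s(x̃) ≥ (p − n)/(1 + 2√(2 log(2p)))²`. -/
theorem exists_dense_vector_same_measurements (n p : ℕ) (hnp : n < p)
    (A : Matrix (Fin n) (Fin p) ℝ) (x : Fin p → ℝ) :
    ∃ xt : Fin p → ℝ, xt ≠ 0 ∧ A.mulVec xt = A.mulVec x ∧
      ((p : ℝ) - n) / (1 + 2 * Real.sqrt (2 * Real.log (2 * p))) ^ 2 ≤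
        (∑ i, |xt i|) ^ 2 / (∑ i, (xt i) ^ 2) := by
  obtain ⟨u, hker, hdim, hl1⟩ :=
    (LinearMap.ker (toEuclideanLin A)).exists_mem_finrank_le_norm_sq_le_sum_abs
  have hAu : A *ᵥ u.ofLp = 0 := by simpa [toLpLin_apply] using hker
  have hp : (1 : ℝ) ≤ p := by exact_mod_cast hnp.pos
  have hgap : (0 : ℝ) < p - n := sub_pos.2 (by exact_mod_cast hnp)
  have hnorm : (p : ℝ) - n ≤ ∑ i, u i ^ 2 := by
    have hcard := A.card_le_card_add_finrank_ker_toEuclideanLin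
    simp only [Fintype.card_fin] at hcard
    rw [← EuclideanSpace.real_norm_sq_eq]
    linarith [show (p : ℝ) ≤ n + finrank ℝ (LinearMap.ker (toEuclideanLin A)) by
      exact_mod_cast hcard]
  have hdenom : 1 < (1 + 2 * Real.sqrt (2 * Real.log (2 * p))) ^ 2 := by
    have : 0 < Real.sqrt (2 * Real.log (2 * p)) :=
      Real.sqrt_pos.2 (mul_pos two_pos (Real.log_pos (by linarith)))
    nlinarith
  have hu : u.ofLp ≠ 0 := fun h => by simp [h] at hnorm; linarith
  have hsparse : ((p : ℝ) - n) / (1 + 2 * Real.sqrt (2 * Real.log (2 * p))) ^ 2 <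
      numericalSparsity u.ofLp :=
    calc _ < (p : ℝ) - n := div_lt_self hgap hdenom
      _ ≤ ∑ i, u i ^ 2 := hnorm
      _ ≤ numericalSparsity u.ofLp :=
        sum_sq_le_numericalSparsity (by rwa [← EuclideanSpace.real_norm_sq_eq])
  obtain ⟨t, hne, hlt⟩ := exists_add_smul_ne_zero_lt_numericalSparsity x hu hsparse
  exact ⟨x + t • u.ofLp, hne, by simp [mulVec_add, mulVec_smul, hAu], hlt.le⟩
end
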